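/- arXiv:1211.6705 — 4 statements merged into one kernel-verified Lean document; each statement's English description precedes it below -/
import Mathlib

section
/- Let A be a symmetric endomorphism of an n-dimensional real inner product space with eigenvalues λ₁,…,λ_n, and let e_j be a unit eigenvector with eigenvalue λ_j. Then ∑_{i=0}^{n/2-1} σ_i(A)·(-λ_j)^{n/2-i-1} = σ_{n/2-1}(A restricted to the orthogonal complement of e_j), where σ_k denotes the k-th elementary symmetric function of the eigenvalues. -/
/-!
Splitting off the eigenvalue `λ_j` gives `σ_{i+1}(A) = σ_{i+1}(A') + λ_j σ_i(A')` for the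
restriction `A'` of `A` to `e_jᗮ`. Substituting this into the alternating sum makes it telescope,
leaving only `σ_{n/2-1}(A')`.
-/

namespace Multiset

theorem esymm_cons_succ {R : Type*} [CommSemiring R] (a : R) (s : Multiset R) (k : ℕ) :
    (a ::ₘ s).esymm (k + 1) = s.esymm (k + 1) + a * s.esymm k := by
  simp only [esymm, powersetCard_cons, map_add, sum_add, map_map, Function.comp_def, prod_cons,
    sum_map_mul_left]

theorem sum_range_esymm_cons_mul_neg_pow {R : Type*} [CommRing R] (a : R) (s : Multiset R)
    (m : ℕ) : ∑ i ∈ Finset.range (m + 1), (a ::ₘ s).esymm i * (-a) ^ (m - i) = s.esymm m := by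
  induction m with
  | zero => simp [esymm]
  | succ m ih =>
    have shift : ∀ i ∈ Finset.range (m + 1),
        (a ::ₘ s).esymm i * (-a) ^ (m + 1 - i) = -a * ((a ::ₘ s).esymm i * (-a) ^ (m - i)) := by
      intro i hi
      rw [Nat.sub_add_comm (Finset.mem_range_succ_iff.mp hi), pow_succ]
      ring
    rw [Finset.sum_range_succ, Finset.sum_congr rfl shift, ← Finset.mul_sum, ih,
      esymm_cons_succ, Nat.sub_self, pow_zero]
    ring

end Multiset

theorem esymm_newton_transform_eigenvalue_general
    (n : ℕ) (hn : Even n) (hpos : 0 < n)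
    (lam : Fin n → ℝ) (j : Fin n) :
    ∑ i ∈ Finset.range (n / 2),
        Multiset.esymm (Finset.univ.val.map lam) i * (-lam j) ^ (n / 2 - i - 1)
      = Multiset.esymm (((Finset.univ.erase j).val).map lam) (n / 2 - 1) := by
  obtain ⟨m, hm⟩ : ∃ m, n / 2 = m + 1 := by
    obtain ⟨k, rfl⟩ := hn
    exact ⟨k - 1, by omega⟩
  have split_off_j : Finset.univ.val.map lam = lam j ::ₘ (Finset.univ.erase j).val.map lam := by
    rw [Finset.erase_val, ← Multiset.map_cons, Multiset.cons_erase (Finset.mem_univ j)]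
  rw [hm, split_off_j, Nat.add_sub_cancel,
    ← Multiset.sum_range_esymm_cons_mul_neg_pow (lam j) _ m]
  refine Finset.sum_congr rfl fun i _ => ?_
  rw [Nat.sub_right_comm, Nat.add_sub_cancel]

/-- Let `A` be a symmetric endomorphism of an `n`-dimensional real inner product space (`n` even)
with eigenvalues `lam 1, …, lam n` given by an orthonormal eigenbasis `e`, and let `e j` be a unit
eigenvector with eigenvalue `lam j`.  Then
`∑_{i=0}^{n/2-1} σ_i(A)·(-lam j)^(n/2-i-1) = σ_{n/2-1}(A restricted to (e j)ᗮ)`,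
where `σ_k` is the `k`-th elementary symmetric function of the eigenvalues; the restriction of `A`
to the orthogonal complement of `e j` has eigenvalues `{lam i : i ≠ j}`. -/
theorem esymm_newton_transform_eigenvalue
    {V : Type*} [NormedAddCommGroup V] [InnerProductSpace ℝ V]
    (n : ℕ) (hn : Even n) (hpos : 0 < n)
    (A : V →ₗ[ℝ] V) (hA : LinearMap.IsSymmetric A)
    (e : OrthonormalBasis (Fin n) ℝ V) (lam : Fin n → ℝ)
    (heig : ∀ i, A (e i) = lam i • e i) (j : Fin n) :
    ∑ i ∈ Finset.range (n / 2),
        Multiset.esymm (Finset.univ.val.map lam) i * (-lam j) ^ (n / 2 - i - 1)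
      = Multiset.esymm (((Finset.univ.erase j).val).map lam) (n / 2 - 1) :=
  esymm_newton_transform_eigenvalue_general n hn hpos lam j
end

section
/- For n even and λ ≠ 0, the quantity −½(λ/4)^{n/2−1}·∑_{k=0}^{n/2−1} C(n,k)(−1)^k equals −¼(−λ/4)^{n/2−1}·n!/((n/2)!²). Consequently, the Hessian of the renormalized volume at an Einstein metric h₀ with Ric = λ(n−1)h₀ is Hess(V_n) = −¼(−λ/4)^{n/2−1}·(n!/((n/2)!²))·h₀^{-1}. -/
/-!
Writing `n = 2m`, both sides reduce to the alternating sum `S = ∑_{k<m} C(2m,k)(-1)^k` of the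
binomial coefficients below the middle one. Pascal's rule telescopes it to
`S = (-1)^{m-1} C(2m-1,m-1)`, and by symmetry of row `2m-1` this is half of `(-1)^{m-1} C(2m,m)`,
where `C(2m,m) = (2m)!/(m!)²`. In the Hessian sum the substitution `k = m - j` turns
`(1/(2j)) v_{2k} · j (λ/4)^{j-1}` into `½ (λ/4)^{m-1} C(2m,k)(-1)^k`.
-/

open Finset

theorem Nat.choose_two_mul_add_two_succ (k : ℕ) :
    (2 * k + 2).choose (k + 1) = 2 * (2 * k + 1).choose k := by
  rw [Nat.choose_succ_succ, Nat.choose_symm_half, ← two_mul]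

theorem two_mul_sum_range_choose_mul_neg_one_pow {R : Type*} [CommRing R] {m : ℕ}
    (hm : m ≠ 0) :
    2 * ∑ k ∈ range m, ((2 * m).choose k : R) * (-1) ^ k
      = ((2 * m).choose m : R) * (-1) ^ (m - 1) := by
  obtain ⟨k, rfl⟩ := Nat.exists_eq_add_one_of_ne_zero hm
  have h := congrArg (Int.cast : ℤ → R)
    (Int.alternating_sum_range_choose_eq_choose (n := 2 * k + 1) (m := k))
  push_cast at h
  rw [Nat.add_sub_cancel, show 2 * (k + 1) = 2 * k + 1 + 1 by ring]
  simp_rw [mul_comm _ ((-1 : R) ^ _), h, Nat.choose_two_mul_add_two_succ]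
  push_cast
  ring

theorem half_mul_alternating_sum_choose_eq {m : ℕ} (hm : m ≠ 0) (lam : ℝ) :
    1 / 2 * (lam / 4) ^ (m - 1) * ∑ k ∈ range m, ((2 * m).choose k : ℝ) * (-1) ^ k
      = 1 / 4 * (-lam / 4) ^ (m - 1) * ((2 * m).choose m : ℝ) := by
  rw [neg_div, neg_eq_neg_one_mul (lam / 4), mul_pow]
  linear_combination
    (1 / 4 * (lam / 4) ^ (m - 1)) * two_mul_sum_range_choose_mul_neg_one_pow (R := ℝ) hm

theorem hessian_sum_eq_half_mul_alternating_sum (n m : ℕ) (lam : ℝ) :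
    ∑ j ∈ range (m + 1) \ {0},
        (1 / (2 * (j : ℝ))) * ((n.choose (m - j) : ℝ) * (-lam / 4) ^ (m - j))
          * ((j : ℝ) * (lam / 4) ^ (j - 1))
      = 1 / 2 * (lam / 4) ^ (m - 1) * ∑ k ∈ range m, (n.choose k : ℝ) * (-1) ^ k := by
  rw [mul_sum]
  refine sum_nbij' (fun j => m - j) (fun k => m - k) ?_ ?_ ?_ ?_ ?_
  all_goals try (intro j hj; simp only [mem_sdiff, mem_range, mem_singleton] at hj ⊢; omega)
  intro j hj
  simp only [mem_sdiff, mem_range, mem_singleton] at hj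
  have hpow : (lam / 4) ^ (m - j) * (lam / 4) ^ (j - 1) = (lam / 4) ^ (m - 1) := by
    rw [← pow_add]; congr 1; omega
  have hj : (j : ℝ) ≠ 0 := by exact_mod_cast hj.2
  rw [neg_div, neg_eq_neg_one_mul (lam / 4), mul_pow, ← hpow]
  field_simp

theorem Nat.cast_factorial_two_mul_div_sq (m : ℕ) :
    ((2 * m).factorial : ℝ) / (m.factorial : ℝ) ^ 2 = ((2 * m).choose m : ℝ) := by
  rw [Nat.cast_choose ℝ (by omega : m ≤ 2 * m), show 2 * m - m = m by omega, sq]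

theorem hessian_renormalized_volume_einstein_general (n : ℕ) (hn : Even n) (h2 : 2 ≤ n)
    (lam : ℝ) :
    (-(1 / 2) * (lam / 4) ^ (n / 2 - 1)
        * ∑ k ∈ Finset.range (n / 2), (n.choose k : ℝ) * (-1) ^ k
      = -(1 / 4) * (-lam / 4) ^ (n / 2 - 1) * ((n.factorial : ℝ) / ((n / 2).factorial : ℝ) ^ 2))
    ∧ (-(∑ j ∈ Finset.range (n / 2 + 1) \ {0},
          (1 / (2 * (j : ℝ))) * ((n.choose (n / 2 - j) : ℝ) * (-lam / 4) ^ (n / 2 - j))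
            * ((j : ℝ) * (lam / 4) ^ (j - 1)))
      = -(1 / 4) * (-lam / 4) ^ (n / 2 - 1) * ((n.factorial : ℝ) / ((n / 2).factorial : ℝ) ^ 2)) := by
  obtain ⟨m, rfl⟩ := hn
  rw [← two_mul, Nat.mul_div_cancel_left m two_pos] at *
  have hm : m ≠ 0 := by omega
  have key := half_mul_alternating_sum_choose_eq hm lam
  rw [Nat.cast_factorial_two_mul_div_sq, hessian_sum_eq_half_mul_alternating_sum]
  constructor <;> linear_combination -key

/-- For `n` even (`n ≥ 2`) and `λ ≠ 0`, the quantity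
`−½(λ/4)^{n/2−1}·∑_{k=0}^{n/2−1} C(n,k)(−1)^k` equals
`−¼(−λ/4)^{n/2−1}·n!/((n/2)!²)`.  Consequently, the Hessian of the renormalized volume at an
Einstein metric `h₀` with `Ric = λ(n−1)h₀`, namely the coefficient of `h₀⁻¹` in
`Hess(V_n) = −∑_{j=1}^{n/2}(1/(2j))·v_{n−2j}·h^{(2j−2)}` (where `v_{2j} = C(n,j)(−λ/4)^j` and
`h^{(2j)} = (j+1)(λ/4)^j h₀⁻¹`), equals `−¼(−λ/4)^{n/2−1}·(n!/((n/2)!²))`. -/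
theorem hessian_renormalized_volume_einstein (n : ℕ) (hn : Even n) (h2 : 2 ≤ n)
    (lam : ℝ) (hlam : lam ≠ 0) :
    (-(1 / 2) * (lam / 4) ^ (n / 2 - 1)
        * ∑ k ∈ Finset.range (n / 2), (n.choose k : ℝ) * (-1) ^ k
      = -(1 / 4) * (-lam / 4) ^ (n / 2 - 1) * ((n.factorial : ℝ) / ((n / 2).factorial : ℝ) ^ 2))
    ∧ (-(∑ j ∈ Finset.range (n / 2 + 1) \ {0},
          (1 / (2 * (j : ℝ))) * ((n.choose (n / 2 - j) : ℝ) * (-lam / 4) ^ (n / 2 - j))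
            * ((j : ℝ) * (lam / 4) ^ (j - 1)))
      = -(1 / 4) * (-lam / 4) ^ (n / 2 - 1) * ((n.factorial : ℝ) / ((n / 2).factorial : ℝ) ^ 2)) :=
  hessian_renormalized_volume_einstein_general n hn h2 lam
end

section
/- Define for u ≥ 0 the function H₀(u) = (c₀ + 1 − π/cosh(πu) + 2Re(Ψ(5/2 − iu)))·(u² + 1/4)(u² + 9/4) + (u² + 1/4)² + 2, where c₀ = −5/2 + 2γ − 2 ln 2. Then H₀(u) > 0 for all u ≥ 0. -/
open Complex Real

/-- The digamma function `Ψ(z) = Γ'(z)/Γ(z)`. -/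
noncomputable def digammaC (z : ℂ) : ℂ := deriv Complex.Gamma z / Complex.Gamma z

/-!
For `Re z > 0` the digamma function equals `-γ + ∑ₙ (1/(n+1) - 1/(n+z))`. On the positive reals
both sides are monotone (for `Ψ` because `log Γ` is convex), satisfy `f (x + 1) = f x + 1/x` and
agree at `1`; two such functions differ by at most `1/p` on `[p, p + 1]` and the difference is
`1`-periodic, so they coincide, and the identity theorem extends this to the half-plane.
Termwise `Re (1/(n+z)) ≤ 1/(n + Re z)`, hence `Re Ψ(5/2 - iu) ≥ Ψ(5/2) = 8/3 - γ - 2 log 2`.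

With `x = u² + 1/4` this gives
`H₀(u) ≥ (29/6 - 6 log 2) x² + 2 (23/6 - 6 log 2) x + 2 - π x (x + 2) / cosh (π u)`.
The quadratic is at least `46/25` for every `x` (its minimum is `≈ 1.843`), while
`cosh t ≥ 1 + t²/2 + t⁴/24` makes the subtracted term smaller than `46/25`.
-/

open Filter Set Topology

namespace Complex

noncomputable def digammaTerm (z : ℂ) (n : ℕ) : ℂ := ((n : ℂ) + 1)⁻¹ - ((n : ℂ) + z)⁻¹

noncomputable def digammaSeries (z : ℂ) : ℂ := -eulerMascheroniConstant + ∑' n, digammaTerm z n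

theorem natCast_add_ne_zero_of_re_pos {z : ℂ} (hz : 0 < z.re) (n : ℕ) : (n : ℂ) + z ≠ 0 := by
  intro h
  have := congrArg re h
  rw [add_re, natCast_re, zero_re] at this
  linarith [(n.cast_nonneg : (0 : ℝ) ≤ n)]

theorem ne_neg_natCast_of_re_pos {z : ℂ} (hz : 0 < z.re) (m : ℕ) : z ≠ -m := fun h =>
  natCast_add_ne_zero_of_re_pos hz m (by rw [h]; ring)

theorem norm_inv_natCast_add_le {z : ℂ} (hz : 0 < z.re) (n : ℕ) :
    ‖((n : ℂ) + z)⁻¹‖ ≤ ((n : ℝ) + z.re)⁻¹ := by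
  rw [norm_inv]
  exact inv_anti₀ (by positivity) (by simpa using re_le_norm ((n : ℂ) + z))

theorem norm_digammaTerm_le {z : ℂ} {ε M : ℝ} (hε : 0 < ε) (hε₁ : ε ≤ 1) (hz : ε ≤ z.re)
    (hM : ‖z - 1‖ ≤ M) (n : ℕ) : ‖digammaTerm z n‖ ≤ M / ε * ((n + 1 : ℝ) ^ 2)⁻¹ := by
  have hz₀ : 0 < z.re := hε.trans_le hz
  have hn : 0 < (n : ℝ) + 1 := by positivity
  have hM₀ : 0 ≤ M := (norm_nonneg _).trans hM
  have hterm : digammaTerm z n = (z - 1) * (((n : ℂ) + 1)⁻¹ * ((n : ℂ) + z)⁻¹) := by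
    have := natCast_add_ne_zero_of_re_pos hz₀ n
    have : (n : ℂ) + 1 ≠ 0 := by exact_mod_cast n.succ_ne_zero
    rw [digammaTerm]
    field_simp
    ring
  have h₁ : ‖((n : ℂ) + 1)⁻¹‖ = ((n : ℝ) + 1)⁻¹ := by
    rw [norm_inv]; congr 1; exact_mod_cast Complex.norm_natCast (n + 1)
  -- `n + Re z ≥ ε (n + 1)` because `ε ≤ 1` and `ε ≤ Re z`
  have h₂ : ‖((n : ℂ) + z)⁻¹‖ ≤ (ε * ((n : ℝ) + 1))⁻¹ :=
    (norm_inv_natCast_add_le hz₀ n).trans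
      (inv_anti₀ (by positivity) (by nlinarith [(n.cast_nonneg : (0 : ℝ) ≤ n)]))
  rw [hterm, norm_mul, norm_mul, h₁]
  calc ‖z - 1‖ * (((n : ℝ) + 1)⁻¹ * ‖((n : ℂ) + z)⁻¹‖)
      ≤ M * (((n : ℝ) + 1)⁻¹ * (ε * ((n : ℝ) + 1))⁻¹) := by gcongr
    _ = M / ε * ((n + 1 : ℝ) ^ 2)⁻¹ := by field_simp

theorem summable_inv_natCast_add_one_sq : Summable fun n : ℕ => ((n + 1 : ℝ) ^ 2)⁻¹ := by
  simpa [one_div] using (summable_nat_add_iff 1).mpr (Real.summable_one_div_nat_pow.mpr one_lt_two)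

theorem summable_digammaTerm {z : ℂ} (hz : 0 < z.re) : Summable (digammaTerm z) :=
  .of_norm_bounded (summable_inv_natCast_add_one_sq.mul_left _)
    (norm_digammaTerm_le (lt_min hz one_pos) (min_le_right _ _) (min_le_left _ _) le_rfl)

theorem differentiableAt_digammaSeries {z : ℂ} (hz : 0 < z.re) :
    DifferentiableAt ℂ digammaSeries z := by
  set r := z.re / 2 with hr_def
  have hr : 0 < r := by positivity
  have hball : ∀ w ∈ Metric.ball z r, r ≤ w.re ∧ ‖w - 1‖ ≤ ‖z - 1‖ + r := by
    intro w hw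
    rw [Metric.mem_ball, dist_eq_norm] at hw
    have := (abs_le.mp (abs_re_le_norm (w - z))).1
    rw [sub_re] at this
    refine ⟨by linarith, ?_⟩
    calc ‖w - 1‖ = ‖(z - 1) + (w - z)‖ := by ring_nf
      _ ≤ ‖z - 1‖ + r := (norm_add_le _ _).trans (by linarith)
  have hdiff : DifferentiableOn ℂ (fun w => ∑' n, digammaTerm w n) (Metric.ball z r) := by
    refine differentiableOn_tsum_of_summable_norm (summable_inv_natCast_add_one_sq.mul_left _)
      (fun n => ?_) Metric.isOpen_ball fun n w hw =>
        norm_digammaTerm_le (lt_min hr one_pos) (min_le_right _ _)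
          ((min_le_left _ _).trans (hball w hw).1) (hball w hw).2 n
    exact (differentiableOn_const _).sub (((differentiableOn_const _).add differentiableOn_id).inv
      fun w hw => natCast_add_ne_zero_of_re_pos (hr.trans_le (hball w hw).1) n)
  exact ((hdiff.const_add _).differentiableAt (Metric.isOpen_ball.mem_nhds
    (Metric.mem_ball_self hr)))

theorem hasSum_inv_natCast_add_sub {z : ℂ} (hz : 0 < z.re) :
    HasSum (fun n : ℕ => ((n : ℂ) + z)⁻¹ - ((n : ℂ) + 1 + z)⁻¹) z⁻¹ := by
  have hz₁ : 0 < (z + 1).re := by rw [add_re, one_re]; linarith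
  have hsummable : Summable fun n : ℕ => ((n : ℂ) + z)⁻¹ - ((n : ℂ) + 1 + z)⁻¹ :=
    ((summable_digammaTerm hz₁).sub (summable_digammaTerm hz)).congr fun n => by
      simp only [digammaTerm]; ring_nf
  rw [hsummable.hasSum_iff_tendsto_nat]
  have hpartial (N : ℕ) : ∑ n ∈ Finset.range N, (((n : ℂ) + z)⁻¹ - ((n : ℂ) + 1 + z)⁻¹) =
      z⁻¹ - ((N : ℂ) + z)⁻¹ := by
    simpa using Finset.sum_range_sub' (fun n : ℕ => ((n : ℂ) + z)⁻¹) N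
  have hlim : Tendsto (fun N : ℕ => ((N : ℂ) + z)⁻¹) atTop (𝓝 0) :=
    squeeze_zero_norm (norm_inv_natCast_add_le hz) <| tendsto_inv_atTop_zero.comp
      (tendsto_atTop_add_const_right _ _ tendsto_natCast_atTop_atTop)
  simpa [hpartial] using tendsto_const_nhds.sub hlim

theorem digammaSeries_add_one {z : ℂ} (hz : 0 < z.re) :
    digammaSeries (z + 1) = digammaSeries z + z⁻¹ := by
  have hshift : digammaTerm (z + 1) =
      fun n => digammaTerm z n + (((n : ℂ) + z)⁻¹ - ((n : ℂ) + 1 + z)⁻¹) := by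
    ext n; simp only [digammaTerm]; ring_nf
  rw [digammaSeries, digammaSeries, hshift,
    (summable_digammaTerm hz).tsum_add (hasSum_inv_natCast_add_sub hz).summable,
    (hasSum_inv_natCast_add_sub hz).tsum_eq, add_assoc]

theorem digammaSeries_one : digammaSeries 1 = -eulerMascheroniConstant := by
  simp [digammaSeries, digammaTerm]

theorem digammaTerm_ofReal (x : ℝ) (n : ℕ) :
    digammaTerm x n = (((n : ℝ) + 1)⁻¹ - ((n : ℝ) + x)⁻¹ : ℝ) := by
  push_cast [digammaTerm]; rfl

theorem im_digammaSeries_ofReal (x : ℝ) : (digammaSeries x).im = 0 := by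
  simp only [digammaSeries, digammaTerm_ofReal, ← ofReal_tsum, ← ofReal_neg, ← ofReal_add,
    ofReal_im]

theorem re_digammaSeries_le {z w : ℂ} (hz : 0 < z.re) (hw : 0 < w.re)
    (h : ∀ n, (digammaTerm z n).re ≤ (digammaTerm w n).re) :
    (digammaSeries z).re ≤ (digammaSeries w).re := by
  simp only [digammaSeries, add_re, re_tsum (summable_digammaTerm hz),
    re_tsum (summable_digammaTerm hw)]
  have hs {v : ℂ} (hv : 0 < v.re) := (hasSum_re (summable_digammaTerm hv).hasSum).summable
  exact add_le_add_right (Summable.tsum_le_tsum h (hs hz) (hs hw)) _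

theorem monotoneOn_re_digammaSeries_ofReal :
    MonotoneOn (fun x : ℝ => (digammaSeries x).re) (Ioi 0) := by
  intro x (hx : 0 < x) y (hy : 0 < y) hxy
  refine re_digammaSeries_le (by simpa) (by simpa) fun n => ?_
  simp only [digammaTerm_ofReal, ofReal_re]
  gcongr

theorem re_inv_le_inv_re {w : ℂ} (hw : 0 < w.re) : w⁻¹.re ≤ w.re⁻¹ := by
  have h : w.re ^ 2 ≤ normSq w := by rw [normSq_apply]; nlinarith [mul_self_nonneg w.im]
  calc w⁻¹.re = w.re / normSq w := inv_re w
    _ ≤ w.re / w.re ^ 2 := div_le_div_of_nonneg_left hw.le (by positivity) h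
    _ = w.re⁻¹ := by field_simp

end Complex

section Uniqueness

variable {f g : ℝ → ℝ}

theorem sub_add_natCast_eq_of_add_one (hf : ∀ x, 0 < x → f (x + 1) = f x + x⁻¹)
    (hg : ∀ x, 0 < x → g (x + 1) = g x + x⁻¹) {x : ℝ} (hx : 0 < x) (k : ℕ) :
    f (x + k) - g (x + k) = f x - g x := by
  induction k with
  | zero => simp
  | succ k ih =>
    have hxk : 0 < x + k := by positivity
    rw [Nat.cast_succ, ← add_assoc, hf _ hxk, hg _ hxk, ← ih]
    ring

theorem sub_le_inv_of_monotoneOn_of_add_one (hf_mono : MonotoneOn f (Ioi 0))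
    (hg_mono : MonotoneOn g (Ioi 0))
    (hf : ∀ x, 0 < x → f (x + 1) = f x + x⁻¹) (hg : ∀ x, 0 < x → g (x + 1) = g x + x⁻¹)
    (h₁ : f 1 = g 1) {x : ℝ} (hx : 0 < x) (m : ℕ) : f x - g x ≤ ((m : ℝ) + 1)⁻¹ := by
  have hnat (n : ℕ) : f (n + 1) = g (n + 1) := by
    have := sub_add_natCast_eq_of_add_one hf hg one_pos n
    rw [h₁, sub_self, add_comm, sub_eq_zero] at this
    exact this
  -- `y := x + m + 1` lies in `[p, p + 1]` for the positive integer `p := ⌊x⌋ + m + 1`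
  set p : ℝ := ((⌊x⌋₊ + m : ℕ) : ℝ) + 1 with hp_def
  have hp : 0 < p := by positivity
  have hpy : p ≤ x + (m + 1 : ℕ) := by
    push_cast [hp_def]; linarith [Nat.floor_le hx.le]
  have hyp : x + (m + 1 : ℕ) ≤ p + 1 := by
    push_cast [hp_def]; linarith [Nat.lt_floor_add_one x]
  have hm : p⁻¹ ≤ ((m : ℝ) + 1)⁻¹ := by
    apply inv_anti₀ (by positivity); push_cast [hp_def]; linarith [(⌊x⌋₊.cast_nonneg : (0 : ℝ) ≤ _)]
  have hy : 0 < x + (m + 1 : ℕ) := hp.trans_le hpy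
  rw [← sub_add_natCast_eq_of_add_one hf hg hx (m + 1)]
  have hfy := hf_mono hy (show 0 < p + 1 by positivity) hyp
  have hgy := hg_mono hp hy hpy
  rw [hf _ hp, hnat] at hfy
  linarith

theorem eqOn_of_monotoneOn_of_add_one (hf_mono : MonotoneOn f (Ioi 0))
    (hg_mono : MonotoneOn g (Ioi 0))
    (hf : ∀ x, 0 < x → f (x + 1) = f x + x⁻¹) (hg : ∀ x, 0 < x → g (x + 1) = g x + x⁻¹)
    (h₁ : f 1 = g 1) : EqOn f g (Ioi 0) := by
  intro x (hx : 0 < x)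
  refine eq_of_forall_dist_le fun ε hε => ?_
  obtain ⟨m, hm⟩ := exists_nat_one_div_lt hε
  rw [one_div] at hm
  rw [Real.dist_eq, abs_le]
  constructor
  · linarith [sub_le_inv_of_monotoneOn_of_add_one hg_mono hf_mono hg hf h₁.symm hx m]
  · linarith [sub_le_inv_of_monotoneOn_of_add_one hf_mono hg_mono hf hg h₁ hx m]

end Uniqueness

theorem Real.monotoneOn_logDeriv_Gamma : MonotoneOn (logDeriv Real.Gamma) (Ioi 0) := by
  have hdiff (x : ℝ) (hx : 0 < x) : DifferentiableAt ℝ Real.Gamma x :=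
    Real.differentiableAt_Gamma fun m => ((neg_nonpos.mpr m.cast_nonneg).trans_lt hx).ne'
  have hlog := Real.convexOn_log_Gamma.monotoneOn_deriv fun x (hx : 0 < x) =>
    ((hdiff x hx).log (Real.Gamma_pos_of_pos hx).ne')
  intro x (hx : 0 < x) y (hy : 0 < y) hxy
  have := hlog hx hy hxy
  rwa [Real.deriv_log_comp_eq_logDeriv (hdiff x hx) (Real.Gamma_pos_of_pos hx).ne',
    Real.deriv_log_comp_eq_logDeriv (hdiff y hy) (Real.Gamma_pos_of_pos hy).ne'] at this

namespace Complex

theorem deriv_Gamma_ofReal {x : ℝ} (hx : ∀ m : ℕ, x ≠ -m) :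
    deriv Gamma x = ((deriv Real.Gamma x : ℝ) : ℂ) := by
  have hC := (differentiableAt_Gamma x fun m h => hx m (by exact_mod_cast h)).hasDerivAt.comp_ofReal
  simp only [Gamma_ofReal] at hC
  exact hC.unique (Real.differentiableAt_Gamma hx).hasDerivAt.ofReal_comp

theorem digamma_ofReal {x : ℝ} (hx : ∀ m : ℕ, x ≠ -m) :
    digamma x = ((logDeriv Real.Gamma x : ℝ) : ℂ) := by
  rw [digamma_def, logDeriv_apply, logDeriv_apply, deriv_Gamma_ofReal hx, Gamma_ofReal, ofReal_div]

theorem digamma_ofReal_eq_digammaSeries {x : ℝ} (hx : 0 < x) : digamma x = digammaSeries x := by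
  have hpos {t : ℝ} (ht : 0 < t) : 0 < (t : ℂ).re := by simpa
  have hne {t : ℝ} (ht : 0 < t) (m : ℕ) : t ≠ -m := ((neg_nonpos.mpr m.cast_nonneg).trans_lt ht).ne'
  have hre : EqOn (logDeriv Real.Gamma) (fun t : ℝ => (digammaSeries t).re) (Ioi 0) := by
    refine eqOn_of_monotoneOn_of_add_one Real.monotoneOn_logDeriv_Gamma
      monotoneOn_re_digammaSeries_ofReal (fun t ht => ?_) (fun t ht => ?_) ?_
    · have := digamma_apply_add_one t (ne_neg_natCast_of_re_pos (hpos ht))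
      rw [← ofReal_one, ← ofReal_add, digamma_ofReal (hne (by linarith)), digamma_ofReal (hne ht),
        ← ofReal_inv, ← ofReal_add] at this
      exact_mod_cast this
    · have := congrArg re (digammaSeries_add_one (hpos ht))
      simpa using this
    · simp [logDeriv_apply, Real.eulerMascheroniConstant_eq_neg_deriv, digammaSeries_one]
  apply Complex.ext
  · rw [digamma_ofReal (hne hx), ofReal_re]; exact hre hx
  · rw [digamma_ofReal (hne hx), ofReal_im, im_digammaSeries_ofReal]

theorem eqOn_digamma_digammaSeries : EqOn digamma digammaSeries {z | 0 < z.re} := by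
  have hU : IsOpen {z : ℂ | 0 < z.re} := isOpen_lt continuous_const continuous_re
  have hΓ : AnalyticOnNhd ℂ Gamma {z | 0 < z.re} := DifferentiableOn.analyticOnNhd
    (fun z hz => (differentiableAt_Gamma z (ne_neg_natCast_of_re_pos hz)).differentiableWithinAt) hU
  have hψ : AnalyticOnNhd ℂ digamma {z | 0 < z.re} := fun z hz =>
    (hΓ.deriv z hz).div (hΓ z hz) (Gamma_ne_zero_of_re_pos hz)
  have hS : AnalyticOnNhd ℂ digammaSeries {z | 0 < z.re} := DifferentiableOn.analyticOnNhd
    (fun z hz => (differentiableAt_digammaSeries hz).differentiableWithinAt) hU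
  refine hψ.eqOn_of_preconnected_of_frequently_eq hS (convex_halfSpace_re_gt 0).isPreconnected
    (z₀ := 1) (by simp) ?_
  have hreal : Tendsto ofReal (𝓝[≠] 1) (𝓝[≠] (1 : ℂ)) := by
    rw [← ofReal_one]
    exact continuous_ofReal.continuousWithinAt.tendsto_nhdsWithin fun _ _ ↦ by simp_all
  refine hreal.frequently (Eventually.frequently ?_)
  filter_upwards [eventually_nhdsWithin_of_eventually_nhds (Ioi_mem_nhds one_pos)] with x hx
  exact digamma_ofReal_eq_digammaSeries hx

theorem re_digamma_re_le {z : ℂ} (hz : 0 < z.re) : (digamma z.re).re ≤ (digamma z).re := by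
  have hz' : 0 < (z.re : ℂ).re := by simpa
  rw [eqOn_digamma_digammaSeries hz', eqOn_digamma_digammaSeries hz]
  refine re_digammaSeries_le hz' hz fun n => ?_
  have h := re_inv_le_inv_re (w := n + z) (by simp; positivity)
  rw [add_re, natCast_re] at h
  rw [digammaTerm_ofReal, ofReal_re, digammaTerm, sub_re, ← ofReal_natCast, ← ofReal_one,
    ← ofReal_add, ← ofReal_inv, ofReal_re, ofReal_natCast]
  linarith

theorem digamma_five_halves :
    digamma (5 / 2) = ((-eulerMascheroniConstant - 2 * Real.log 2 + 8 / 3 : ℝ) : ℂ) := by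
  have h₁ := digamma_apply_add_one (1 / 2) (ne_neg_natCast_of_re_pos (by norm_num))
  have h₂ := digamma_apply_add_one (3 / 2) (ne_neg_natCast_of_re_pos (by norm_num))
  rw [show (1 / 2 : ℂ) + 1 = 3 / 2 by norm_num, digamma_one_half] at h₁
  rw [show (3 / 2 : ℂ) + 1 = 5 / 2 by norm_num, h₁] at h₂
  rw [h₂]
  push_cast
  rw [ofReal_log zero_le_two]
  norm_num
  ring

end Complex

theorem digammaC_eq_digamma : digammaC = Complex.digamma := rfl

theorem Real.one_add_sq_div_two_add_pow_four_div_le_cosh (x : ℝ) :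
    1 + x ^ 2 / 2 + x ^ 4 / 24 ≤ Real.cosh x := by
  have h := sum_le_hasSum (Finset.range 3) (fun n _ => by rw [pow_mul]; positivity)
    (Real.hasSum_cosh x)
  norm_num [Finset.sum_range_succ, Nat.factorial] at h
  linarith

theorem pi_mul_quartic_lt_cosh (u : ℝ) :
    π * ((u ^ 2 + 1 / 4) * (u ^ 2 + 9 / 4)) < 46 / 25 * Real.cosh (π * u) := by
  have hcosh := Real.one_add_sq_div_two_add_pow_four_div_le_cosh (π * u)
  have hπ₁ : (3.141592 : ℝ) < π := Real.pi_gt_d6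
  have hπ₂ : π < (3.141593 : ℝ) := Real.pi_lt_d6
  have hu2 := sq_nonneg u
  have hu4 := pow_nonneg hu2 2
  have h2 : π * (5 / 2) ≤ 46 / 25 * (π ^ 2 / 2) := by nlinarith
  have h4 : π ≤ 46 / 25 * (π ^ 4 / 24) := by nlinarith [pow_le_pow_left₀ (by norm_num) hπ₁.le 3]
  nlinarith [mul_le_mul_of_nonneg_right h2 hu2, mul_le_mul_of_nonneg_right h4 hu4]

theorem le_quadratic_log_two (x : ℝ) :
    46 / 25 ≤ (29 / 6 - 6 * Real.log 2) * x ^ 2 + 2 * (23 / 6 - 6 * Real.log 2) * x + 2 := by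
  have hL₁ := Real.log_two_gt_d9
  have hL₂ := Real.log_two_lt_d9
  -- the quadratic attains its minimum near `x = 0.483`
  nlinarith [mul_nonneg (by linarith : (0 : ℝ) ≤ 29 / 6 - 6 * Real.log 2)
    (sq_nonneg (x - 483 / 1000))]

theorem hessian_symbol_pos_of_coeff_ge (u a : ℝ)
    (ha : 23 / 6 - 6 * Real.log 2 - π / Real.cosh (π * u) ≤ a) :
    0 < a * (u ^ 2 + 1 / 4) * (u ^ 2 + 9 / 4) + (u ^ 2 + 1 / 4) ^ 2 + 2 := by
  set x := u ^ 2 + 1 / 4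
  have hx : u ^ 2 + 9 / 4 = x + 2 := by ring
  have hxx : 0 ≤ x * (x + 2) := by positivity
  have hC := cosh_pos (π * u)
  have hcosh : π / Real.cosh (π * u) * (x * (x + 2)) < 46 / 25 := by
    rw [div_mul_eq_mul_div, div_lt_iff₀ hC, ← hx]; exact pi_mul_quartic_lt_cosh u
  have := le_quadratic_log_two x
  rw [hx]
  nlinarith [mul_le_mul_of_nonneg_right ha hxx]

theorem hessian_symbol_positive_general (u : ℝ) :
    0 < (((-5 / 2 + 2 * Real.eulerMascheroniConstant - 2 * Real.log 2) + 1
          - π / Real.cosh (π * u) + 2 * (digammaC (5 / 2 - ↑u * I)).re)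
        * (u ^ 2 + 1 / 4) * (u ^ 2 + 9 / 4)) + (u ^ 2 + 1 / 4) ^ 2 + 2 := by
  have hψ := Complex.re_digamma_re_le (z := 5 / 2 - u * I) (by simp)
  rw [show (((5 / 2 - u * I : ℂ).re : ℝ) : ℂ) = 5 / 2 by simp, Complex.digamma_five_halves,
    ofReal_re, ← digammaC_eq_digamma] at hψ
  apply hessian_symbol_pos_of_coeff_ge
  linarith

/-- With `c₀ = −5/2 + 2γ − 2 ln 2`, the function
`H₀(u) = (c₀ + 1 − π/cosh(πu) + 2Re(Ψ(5/2 − iu)))·(u² + 1/4)(u² + 9/4) + (u² + 1/4)² + 2`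
is positive for all `u ≥ 0`. -/
theorem hessian_symbol_positive (u : ℝ) (hu : 0 ≤ u) :
    0 < (((-5 / 2 + 2 * Real.eulerMascheroniConstant - 2 * Real.log 2) + 1
          - π / Real.cosh (π * u) + 2 * (digammaC (5 / 2 - ↑u * I)).re)
        * (u ^ 2 + 1 / 4) * (u ^ 2 + 9 / 4)) + (u ^ 2 + 1 / 4) ^ 2 + 2 :=
  hessian_symbol_positive_general u
end

section
/- For z = n/2 with n an odd positive integer and ν = −1/2 + iα with α real, the coefficient S(n/2) = Γ(−n/2)Γ((−ν+n/2+1)/2)Γ((ν+n/2+2)/2)/(Γ(n/2)Γ((−ν−n/2+1)/2)Γ((ν−n/2+2)/2)) equals 2^{−n}·(Γ(−n/2)/Γ(n/2))·α·(coth(πα/2))^{(−1)^{(n−1)/2}}·∏_{ℓ=1}^{(n−1)/2}(α² + ℓ²). -/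
/-! With `n = 2m + 1` and `w = iα`, the four Gamma factors involving `ν` pair up as
`Γ(a + 1/2) / Γ(1 - a)` for `a = (1 + m ± w) / 2`. Reflection and duplication turn each into
`2^(1-2a) Γ(2a) sin(πa) / √π`; the recurrence `Γ(s + 1) = s Γ(s)` and reflection once more give
`Γ(1 + m + w) Γ(1 + m - w) = πw / sin(πw) · ∏ (ℓ² - w²)`, the two sines multiply to
`(cos πw + (-1)^m) / 2`, and the half-angle formulas turn `(cosh πα ± 1) / sinh πα` into
`coth(πα/2)^(±1)`. -/

open Complex Real

lemma Real.cosh_add_neg_one_pow_div_sinh {x : ℝ} (hx : x ≠ 0) (m : ℕ) :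
    (cosh x + (-1) ^ m) / sinh x = (cosh (x / 2) / sinh (x / 2)) ^ ((-1 : ℤ) ^ m) := by
  have hsinh : sinh (x / 2) ≠ 0 := sinh_ne_zero.mpr (div_ne_zero hx two_ne_zero)
  have hcosh : cosh (x / 2) ≠ 0 := (cosh_pos _).ne'
  have hx2 : x = 2 * (x / 2) := by ring
  rw [hx2, cosh_two_mul, sinh_two_mul, ← hx2]
  have hid := cosh_sq_sub_sinh_sq (x / 2)
  rcases Nat.even_or_odd m with hm | hm
  · rw [hm.neg_one_pow, hm.neg_one_pow, zpow_one]
    field_simp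
    linear_combination -hid
  · rw [hm.neg_one_pow, hm.neg_one_pow, zpow_neg, zpow_one, inv_div]
    field_simp
    linear_combination hid

namespace Complex

variable {w : ℂ}

lemma Gamma_ne_zero_of_forall_ne_intCast (hw : ∀ k : ℤ, w ≠ k) : Gamma w ≠ 0 :=
  Gamma_ne_zero fun m h => hw (-m) (by simpa using h)

lemma sin_pi_mul_ne_zero_of_forall_ne_intCast (hw : ∀ k : ℤ, w ≠ k) : sin (π * w) ≠ 0 := by
  rw [Ne, sin_eq_zero_iff]
  rintro ⟨k, hk⟩
  exact hw k (mul_left_cancel₀ (ofReal_ne_zero.mpr Real.pi_ne_zero) (by rw [hk, mul_comm]))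

lemma Gamma_add_half_div_Gamma_one_sub (hw : ∀ k : ℤ, w ≠ k) :
    Gamma (w + 1 / 2) / Gamma (1 - w) = Gamma (2 * w) * 2 ^ (1 - 2 * w) * sin (π * w) / √π := by
  have hΓ := Gamma_ne_zero_of_forall_ne_intCast hw
  have hsin := sin_pi_mul_ne_zero_of_forall_ne_intCast hw
  have hsqrt : (√π : ℂ) ≠ 0 := ofReal_ne_zero.mpr (Real.sqrt_pos.mpr Real.pi_pos).ne'
  have hπ : (π : ℂ) = √π * √π := by rw [← ofReal_mul, Real.mul_self_sqrt Real.pi_pos.le]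
  have hreflect : Gamma (1 - w) = π / sin (π * w) / Gamma w := by
    rw [← Gamma_mul_Gamma_one_sub, mul_div_cancel_left₀ _ hΓ]
  calc Gamma (w + 1 / 2) / Gamma (1 - w) = Gamma w * Gamma (w + 1 / 2) * sin (π * w) / π := by
        rw [hreflect]; field_simp
    _ = Gamma (2 * w) * 2 ^ (1 - 2 * w) * sin (π * w) / √π := by
        rw [Gamma_mul_Gamma_add_half, div_eq_div_iff (by simpa [hπ] using hsqrt) hsqrt, hπ]
        ring

lemma Gamma_one_add_nat_add_mul_Gamma_one_add_nat_sub (hw : ∀ k : ℤ, w ≠ k) (m : ℕ) :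
    Gamma (1 + m + w) * Gamma (1 + m - w)
      = π * w / sin (π * w) * ∏ ℓ ∈ Finset.Icc 1 m, ((ℓ : ℂ) ^ 2 - w ^ 2) := by
  induction m with
  | zero =>
    have hw0 : w ≠ 0 := by simpa using hw 0
    rw [Nat.cast_zero, add_zero, add_comm, Gamma_add_one w hw0, Finset.Icc_eq_empty (by omega),
      Finset.prod_empty, mul_one, mul_assoc, Gamma_mul_Gamma_one_sub]
    ring
  | succ m ih =>
    have hplus : 1 + m + w ≠ 0 := fun h => hw (-(1 + m)) (by push_cast; linear_combination h)
    have hminus : 1 + m - w ≠ 0 := fun h => hw (1 + m) (by push_cast; linear_combination -h)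
    rw [Finset.prod_Icc_succ_top (by omega), ← mul_assoc, ← ih, Nat.cast_succ,
      show 1 + (m + 1 : ℂ) + w = 1 + m + w + 1 by ring,
      show 1 + (m + 1 : ℂ) - w = 1 + m - w + 1 by ring,
      Gamma_add_one _ hplus, Gamma_add_one _ hminus]
    ring

lemma sin_pi_mul_one_add_nat_add_half_mul_sin (w : ℂ) (m : ℕ) :
    sin (π * ((1 + m + w) / 2)) * sin (π * ((1 + m - w) / 2)) = (cos (π * w) + (-1) ^ m) / 2 := by
  have hcos : cos (π * (1 + m)) = -(-1) ^ m := by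
    rw [show (π : ℂ) * (1 + m) = ((((m + 1 : ℕ) : ℝ) * π : ℝ) : ℂ) by push_cast; ring,
      ← ofReal_cos, Real.cos_nat_mul_pi]
    push_cast; ring
  have h := cos_sub_cos (π * w) (π * (1 + m))
  rw [hcos, show (π * w + π * (1 + m)) / 2 = π * ((1 + m + w) / 2) by ring,
    show (π * w - π * (1 + m)) / 2 = -(π * ((1 + m - w) / 2)) by ring, sin_neg] at h
  linear_combination (-1 / 2 : ℂ) * h

lemma Gamma_ratio_eq_of_forall_ne_intCast (hw : ∀ k : ℤ, w ≠ k) (m : ℕ) :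
    Gamma ((m + 2 - w) / 2) * Gamma ((m + 2 + w) / 2)
        / (Gamma ((1 - m - w) / 2) * Gamma ((1 - m + w) / 2))
      = (2 ^ (2 * m + 1))⁻¹ * w * (cos (π * w) + (-1) ^ m) / sin (π * w)
          * ∏ ℓ ∈ Finset.Icc 1 m, ((ℓ : ℂ) ^ 2 - w ^ 2) := by
  set a := (1 + m + w) / 2 with ha_def
  set b := (1 + m - w) / 2 with hb_def
  have ha : ∀ k : ℤ, a ≠ k := fun k h => hw (2 * k - 1 - m) (by push_cast; linear_combination 2 * h)
  have hb : ∀ k : ℤ, b ≠ k := fun k h => hw (1 + m - 2 * k) (by push_cast; linear_combination -2 * h)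
  have hpow : (2 : ℂ) ^ (1 - 2 * a) * 2 ^ (1 - 2 * b) = (2 ^ (2 * m))⁻¹ := by
    rw [← cpow_add _ _ two_ne_zero, show 1 - 2 * a + (1 - 2 * b) = -((2 * m : ℕ) : ℂ) by
      rw [ha_def, hb_def]; push_cast; ring, cpow_neg, cpow_natCast]
  have hsqrt : (√π : ℂ) * √π = π := by rw [← ofReal_mul, Real.mul_self_sqrt Real.pi_pos.le]
  calc Gamma ((m + 2 - w) / 2) * Gamma ((m + 2 + w) / 2)
        / (Gamma ((1 - m - w) / 2) * Gamma ((1 - m + w) / 2))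
      = Gamma (a + 1 / 2) / Gamma (1 - a) * (Gamma (b + 1 / 2) / Gamma (1 - b)) := by
        rw [show ((m : ℂ) + 2 - w) / 2 = b + 1 / 2 by rw [hb_def]; ring,
          show ((m : ℂ) + 2 + w) / 2 = a + 1 / 2 by rw [ha_def]; ring,
          show (1 - (m : ℂ) - w) / 2 = 1 - a by rw [ha_def]; ring,
          show (1 - (m : ℂ) + w) / 2 = 1 - b by rw [hb_def]; ring,
          mul_comm (Gamma (b + 1 / 2)), mul_div_mul_comm]
    _ = Gamma (2 * a) * Gamma (2 * b) * (2 ^ (1 - 2 * a) * 2 ^ (1 - 2 * b))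
          * (sin (π * a) * sin (π * b)) / (√π * √π) := by
        rw [Gamma_add_half_div_Gamma_one_sub ha, Gamma_add_half_div_Gamma_one_sub hb]
        ring
    _ = _ := by
        rw [hpow, hsqrt, ha_def, hb_def, sin_pi_mul_one_add_nat_add_half_mul_sin,
          show 2 * ((1 + m + w) / 2) = 1 + m + w by ring,
          show 2 * ((1 + m - w) / 2) = 1 + m - w by ring,
          Gamma_one_add_nat_add_mul_Gamma_one_add_nat_sub hw]
        have hπ : (π : ℂ) ≠ 0 := ofReal_ne_zero.mpr Real.pi_ne_zero
        field_simp
        ring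

lemma Gamma_ratio_ofReal_mul_I (m : ℕ) {α : ℝ} (hα : α ≠ 0) :
    Gamma ((m + 2 - α * I) / 2) * Gamma ((m + 2 + α * I) / 2)
        / (Gamma ((1 - m - α * I) / 2) * Gamma ((1 - m + α * I) / 2))
      = (2 ^ (2 * m + 1))⁻¹ * α
          * (((Real.cosh (π * α / 2) / Real.sinh (π * α / 2)) ^ ((-1 : ℤ) ^ m) : ℝ) : ℂ)
          * ∏ ℓ ∈ Finset.Icc 1 m, ((α : ℂ) ^ 2 + (ℓ : ℂ) ^ 2) := by
  have hπα : π * α ≠ 0 := mul_ne_zero Real.pi_ne_zero hα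
  have hsinh : Complex.sinh (π * α) ≠ 0 := by
    exact_mod_cast ofReal_ne_zero.mpr (Real.sinh_ne_zero.mpr hπα)
  rw [Gamma_ratio_eq_of_forall_ne_intCast (fun k h => hα (by simpa using congrArg im h)),
    ← Real.cosh_add_neg_one_pow_div_sinh hπα, show (π : ℂ) * (α * I) = (π * α : ℂ) * I by ring,
    cos_mul_I, sin_mul_I]
  have hprod : ∀ ℓ ∈ Finset.Icc 1 m, (ℓ : ℂ) ^ 2 - (α * I) ^ 2 = (α : ℂ) ^ 2 + (ℓ : ℂ) ^ 2 :=
    fun ℓ _ => by rw [mul_pow, I_sq]; ring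
  rw [Finset.prod_congr rfl hprod]
  push_cast
  field_simp

end Complex

theorem scattering_coefficient_odd_dimension_general (n : ℕ) (hn : Odd n)
    (α : ℝ) (hα : α ≠ 0) :
    Complex.Gamma (-((n : ℂ) / 2))
        * Complex.Gamma ((-(-1 / 2 + ↑α * I) + (n : ℂ) / 2 + 1) / 2)
        * Complex.Gamma (((-1 / 2 + ↑α * I) + (n : ℂ) / 2 + 2) / 2)
      / (Complex.Gamma ((n : ℂ) / 2)
        * Complex.Gamma ((-(-1 / 2 + ↑α * I) - (n : ℂ) / 2 + 1) / 2)
        * Complex.Gamma (((-1 / 2 + ↑α * I) - (n : ℂ) / 2 + 2) / 2))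
    = 2 ^ (-(n : ℤ)) * (Complex.Gamma (-((n : ℂ) / 2)) / Complex.Gamma ((n : ℂ) / 2)) * (α : ℂ)
        * ((((Real.cosh (π * α / 2) / Real.sinh (π * α / 2)) ^ ((-1 : ℤ) ^ ((n - 1) / 2)) : ℝ)) : ℂ)
        * ∏ ℓ ∈ Finset.Icc 1 ((n - 1) / 2), ((α : ℂ) ^ 2 + (ℓ : ℂ) ^ 2) := by
  obtain ⟨m, rfl⟩ := hn
  have hm : (2 * m + 1 - 1) / 2 = m := by omega
  rw [hm, mul_assoc (Complex.Gamma _), mul_assoc (Complex.Gamma _), mul_div_mul_comm,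
    show (-(-1 / 2 + ↑α * I) + ((2 * m + 1 : ℕ) : ℂ) / 2 + 1) / 2 = ((m : ℂ) + 2 - α * I) / 2 by
      push_cast; ring,
    show ((-1 / 2 + ↑α * I) + ((2 * m + 1 : ℕ) : ℂ) / 2 + 2) / 2 = ((m : ℂ) + 2 + α * I) / 2 by
      push_cast; ring,
    show (-(-1 / 2 + ↑α * I) - ((2 * m + 1 : ℕ) : ℂ) / 2 + 1) / 2 = (1 - (m : ℂ) - α * I) / 2 by
      push_cast; ring,
    show ((-1 / 2 + ↑α * I) - ((2 * m + 1 : ℕ) : ℂ) / 2 + 2) / 2 = (1 - (m : ℂ) + α * I) / 2 by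
      push_cast; ring,
    Gamma_ratio_ofReal_mul_I m hα, zpow_neg, zpow_natCast]
  ring

/-- For `z = n/2` with `n` an odd positive integer and `ν = −1/2 + iα` with `α` real nonzero,
the scattering coefficient
`S(n/2) = Γ(−n/2)Γ((−ν+n/2+1)/2)Γ((ν+n/2+2)/2)/(Γ(n/2)Γ((−ν−n/2+1)/2)Γ((ν−n/2+2)/2))`
equals `2^{−n}·(Γ(−n/2)/Γ(n/2))·α·(coth(πα/2))^{(−1)^{(n−1)/2}}·∏_{ℓ=1}^{(n−1)/2}(α² + ℓ²)`. -/
theorem scattering_coefficient_odd_dimension (n : ℕ) (hn : Odd n) (hpos : 0 < n)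
    (α : ℝ) (hα : α ≠ 0) :
    Complex.Gamma (-((n : ℂ) / 2))
        * Complex.Gamma ((-(-1 / 2 + ↑α * I) + (n : ℂ) / 2 + 1) / 2)
        * Complex.Gamma (((-1 / 2 + ↑α * I) + (n : ℂ) / 2 + 2) / 2)
      / (Complex.Gamma ((n : ℂ) / 2)
        * Complex.Gamma ((-(-1 / 2 + ↑α * I) - (n : ℂ) / 2 + 1) / 2)
        * Complex.Gamma (((-1 / 2 + ↑α * I) - (n : ℂ) / 2 + 2) / 2))
    = 2 ^ (-(n : ℤ)) * (Complex.Gamma (-((n : ℂ) / 2)) / Complex.Gamma ((n : ℂ) / 2)) * (α : ℂ)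
        * ((((Real.cosh (π * α / 2) / Real.sinh (π * α / 2)) ^ ((-1 : ℤ) ^ ((n - 1) / 2)) : ℝ)) : ℂ)
        * ∏ ℓ ∈ Finset.Icc 1 ((n - 1) / 2), ((α : ℂ) ^ 2 + (ℓ : ℂ) ^ 2) :=
  scattering_coefficient_odd_dimension_general n hn α hα
end
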